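/- Assume: (1) every planar open book (S, φ) supporting an overtwisted contact structure admits a transverse overtwisted disc D all of whose valence ≤ 1 vertices of G₋₋(D) are strongly essential; and (2) for any strongly essential negative elliptic point v on binding component C with p positive and n negative hyperbolic points connected to v by singular leaves, the fractional Dehn twist coefficient satisfies −p ≤ c(φ, C) ≤ n. Then: if (S, φ) is a planar open book with c(φ, C) > 1 for every boundary component C of S, the supported contact structure is tight. -/
import Mathlib


/-- Abstract derivation of Corollary 1.2 from Theorem 1.1 and Lemma 2.4.
`OB` is a type of open books, `Bd ob` the boundary components of the page of
`ob`, `fdtc ob C` the fractional Dehn twist coefficient, and `Disc ob` the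
transverse overtwisted discs in `M_{(S,φ)}`; `Vtx d` are the vertices of
`G₋₋(d)`, each lying on a binding component, with its numbers of attached
positive/negative hyperbolic points. Assuming:
(1) every planar open book supporting an overtwisted contact structure admits a
    transverse overtwisted disc all of whose valence `≤ 1` vertices are
    strongly essential;
(2) for a strongly essential vertex `v` on binding component `C`,
    `−p ≤ c(φ, C) ≤ n`;
together with the facts that `G₋₋` of a disc always has a valence `≤ 1` vertex
and that such a vertex has `n ≤ 1`, any planar open book with `c(φ, C) > 1` for
all boundary components `C` supports a tight (non-overtwisted) contact
structure. -/
theorem stmt_12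
    (OB : Type*) (Bd : OB → Type*)
    (planar overtwisted : OB → Prop)
    (fdtc : (ob : OB) → Bd ob → ℝ)
    (Disc : OB → Type*)
    (Vtx : {ob : OB} → Disc ob → Type*)
    (onComp : {ob : OB} → (d : Disc ob) → Vtx d → Bd ob)
    (valenceLeOne stronglyEssential : {ob : OB} → (d : Disc ob) → Vtx d → Prop)
    (posHyp negHyp : {ob : OB} → (d : Disc ob) → Vtx d → ℕ)
    -- every transverse overtwisted disc's tree G₋₋ has a valence ≤ 1 vertex
    (hleaf : ∀ (ob : OB) (d : Disc ob), ∃ v : Vtx d, valenceLeOne d v)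
    -- a valence ≤ 1 vertex has at most one attached negative hyperbolic point
    (hval : ∀ (ob : OB) (d : Disc ob) (v : Vtx d),
      valenceLeOne d v → negHyp d v ≤ 1)
    -- (1): Theorem 1.1
    (h1 : ∀ ob : OB, planar ob → overtwisted ob →
      ∃ d : Disc ob, ∀ v : Vtx d, valenceLeOne d v → stronglyEssential d v)
    -- (2): Lemma 2.4
    (h2 : ∀ (ob : OB) (d : Disc ob) (v : Vtx d), stronglyEssential d v →
      -(posHyp d v : ℝ) ≤ fdtc ob (onComp d v) ∧
        fdtc ob (onComp d v) ≤ (negHyp d v : ℝ)) :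
    ∀ ob : OB, planar ob → (∀ C : Bd ob, 1 < fdtc ob C) →
      ¬ overtwisted ob := by
  intro ob hp hC hov
  obtain ⟨d, hd⟩ := h1 ob hp hov
  obtain ⟨v, hv⟩ := hleaf ob d
  have h := (h2 ob d v (hd v hv)).2
  have hn := hval ob d v hv
  have := hC (onComp d v)
  have : (negHyp d v : ℝ) ≤ 1 := by exact_mod_cast hn
  linarith
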